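/- For all u, v ∈ FN(X), ε(u ⋄ v) = ε(u)ε(v); that is, ε is a k-algebra homomorphism from (FN(X), ⋄) to k. -/

import Mathlib

open scoped TensorProduct

universe u v w

/-- Letters of bracketed words in `X`: either a variable from `X` or a bracket
`⌊u⌋` enclosing a (bracketed) word `u`. Lists of letters are exactly the bracketed
words, i.e. the elements of the free operated monoid `𝔐(X)`. -/
inductive Lt (X : Type u) : Type u
  | var : X → Lt X
  | brk : List (Lt X) → Lt X

namespace Nij

noncomputable section

variable {X : Type u}

/-- Two letters may be adjacent in an "alternating" word iff they are not both brackets. -/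
def altP : Lt X → Lt X → Prop
  | Lt.brk _, Lt.brk _ => False
  | _, _ => True

/-- A letter is good (i.e. lies in `X ⊔ ⌊𝔛_∞⌋`) if each bracket encloses a word whose
letters are good and in which no two consecutive letters are brackets. -/
inductive GoodL : Lt X → Prop
  | var (x : X) : GoodL (Lt.var x)
  | brk (u : List (Lt X)) (h1 : ∀ a ∈ u, GoodL a) (h2 : List.Chain' altP u) :
      GoodL (Lt.brk u)

/-- The words in `𝔛_∞`: all letters good and no two consecutive brackets. -/
def GoodW (w : List (Lt X)) : Prop := (∀ a ∈ w, GoodL a) ∧ List.Chain' altP w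

/-- The set `𝔛_∞` of basis words of the free Nijenhuis algebra. -/
def NW (X : Type u) : Type u := {w : List (Lt X) // GoodW w}

/-- The free Nijenhuis algebra `FN(X) = k𝔛_∞` as a `k`-module. -/
abbrev FN (k : Type v) [CommRing k] (X : Type u) : Type (max u v) := NW X →₀ k

/-- The empty word `1 ∈ 𝔛_∞`. -/
def one : NW X := ⟨[], ⟨fun _ ha => by simp at ha, List.isChain_nil⟩⟩

/-- A single good letter forms a good word. -/
lemma goodW_singleton {a : Lt X} (h : GoodL a) : GoodW [a] := by
  constructor
  · intro b hb
    rw [List.mem_singleton] at hb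
    exact hb ▸ h
  · exact List.isChain_singleton _

/-- The single-letter word `x ∈ 𝔛_∞` for `x ∈ X`. -/
def varW (x : X) : NW X := ⟨[Lt.var x], goodW_singleton (GoodL.var x)⟩

/-- The word `⌊w⌋ ∈ 𝔛_∞` for `w ∈ 𝔛_∞`. -/
def NopW (w : NW X) : NW X := ⟨[Lt.brk w.1], goodW_singleton (GoodL.brk _ w.2.1 w.2.2)⟩

/-- The single-letter word `[a] ∈ 𝔛_∞` for a good letter `a ∈ X ⊔ ⌊𝔛_∞⌋`. -/
def letterW (a : Lt X) (h : GoodL a) : NW X := ⟨[a], goodW_singleton h⟩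

variable (k : Type v) [CommRing k]

/-- The basis element of `FN(X)` corresponding to `w ∈ 𝔛_∞`. -/
def bw (w : NW X) : FN k X := Finsupp.single w 1

/-- The Nijenhuis operator `N_X` on `FN(X)`, the linear extension of `w ↦ ⌊w⌋`. -/
def Nop : FN k X →ₗ[k] FN k X := Finsupp.lmapDomain k k NopW

/-- The natural linear embedding `k𝔛_∞ → k𝔐(X)` into the monoid algebra of the free
monoid of bracketed words, used to express concatenation of words linearly. -/
def iota : FN k X →ₗ[k] MonoidAlgebra k (FreeMonoid (Lt X)) :=
  (MonoidAlgebra.coeffLinearEquiv k).symm.toLinearMap ∘ₗ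
    Finsupp.lmapDomain k k (fun w : NW X => FreeMonoid.ofList w.1)

/-- The left counit `ε : FN(X) → k`, `ε(1) = 1` and `ε(w) = 0` for `1 ≠ w ∈ 𝔛_∞`. -/
def eps : FN k X →ₗ[k] k := Finsupp.lapply one

/-- A specification of the product `⋄` on `FN(X) = k𝔛_∞`: a `k`-bilinear map satisfying
the defining recursive equations of the paper. These equations determine `⋄` uniquely.

* `concat`: if the last letter of `u` and the first letter of `v` are not both brackets
  (in particular if `u` or `v` is empty), then `u ⋄ v` is the concatenation `uv`.
* `brkbrk`: `⌊ū⌋ ⋄ ⌊v̄⌋ = ⌊ū ⋄ ⌊v̄⌋⌋ + ⌊⌊ū⌋ ⋄ v̄⌋ − ⌊⌊ū ⋄ v̄⌋⌋`.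
* `split`: if `u = u₀a` and `v = bv₀` then `u ⋄ v = u₀ (a ⋄ b) v₀`, the outer products
  being concatenation (expressed in the monoid algebra `k𝔐(X)` via `iota`). -/
structure DiamondSpec (k : Type v) (X : Type u) [CommRing k] where
  mul : FN k X →ₗ[k] FN k X →ₗ[k] FN k X
  concat : ∀ u v : NW X,
    (¬ ∃ (a b : List (Lt X)), u.1.getLast? = some (Lt.brk a) ∧ v.1.head? = some (Lt.brk b)) →
    iota k (mul (bw k u) (bw k v)) = iota k (bw k u) * iota k (bw k v)
  brkbrk : ∀ u v : NW X,
    mul (Nop k (bw k u)) (Nop k (bw k v)) =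
      Nop k (mul (bw k u) (Nop k (bw k v))) + Nop k (mul (Nop k (bw k u)) (bw k v))
        - Nop k (Nop k (mul (bw k u) (bw k v)))
  split : ∀ (u v : NW X) (u₀ v₀ : List (Lt X)) (a b : Lt X)
      (ha : GoodW [a]) (hb : GoodW [b]),
      u.1 = u₀ ++ [a] → v.1 = b :: v₀ →
      iota k (mul (bw k u) (bw k v)) =
        MonoidAlgebra.of k (FreeMonoid (Lt X)) (FreeMonoid.ofList u₀) *
          iota k (mul (bw k ⟨[a], ha⟩) (bw k ⟨[b], hb⟩)) *
          MonoidAlgebra.of k (FreeMonoid (Lt X)) (FreeMonoid.ofList v₀)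

/-- The componentwise product on `FN(X) ⊗ FN(X)` induced by `⋄`:
`(a ⊗ b) ⋄ (c ⊗ d) = (a ⋄ c) ⊗ (b ⋄ d)`. -/
def mul2 (d : DiamondSpec k X) :
    (FN k X ⊗[k] FN k X) →ₗ[k] (FN k X ⊗[k] FN k X) →ₗ[k] (FN k X ⊗[k] FN k X) :=
  TensorProduct.lift <| LinearMap.mk₂ k
    (fun a b => TensorProduct.map (d.mul a) (d.mul b))
    (fun a a' b => by simp only [map_add, TensorProduct.map_add_left])
    (fun c a b => by simp only [map_smul, TensorProduct.map_smul_left])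
    (fun a b b' => by simp only [map_add, TensorProduct.map_add_right])
    (fun c a b => by simp only [map_smul, TensorProduct.map_smul_right])

/-- A specification of the coproduct `Δ` on `FN(X)`: a `k`-linear map satisfying the
defining equations of the paper. These equations determine `Δ` uniquely.

* `delta_one`: `Δ(1) = 1 ⊗ 1`;
* `delta_var`: `Δ(x) = 1 ⊗ x` for `x ∈ X`;
* `delta_brk`: `Δ(⌊w⌋) = (id ⊗ N_X) Δ(w)` (the 1-cocycle condition on basis elements);
* `delta_split`: `Δ(w₁ ⋄ ⋯ ⋄ w_m) = Δ(w₁) ⋄ (Δ(w₂) ⋄ ⋯ ⋄ Δ(w_m))` for the alternating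
  `⋄`-factorization of a word into its letters, stated in its binary recursive form. -/
structure DeltaSpec (k : Type v) (X : Type u) [CommRing k] extends DiamondSpec k X where
  delta : FN k X →ₗ[k] FN k X ⊗[k] FN k X
  delta_one : delta (bw k one) = bw k one ⊗ₜ[k] bw k one
  delta_var : ∀ x : X, delta (bw k (varW x)) = bw k one ⊗ₜ[k] bw k (varW x)
  delta_brk : ∀ w : NW X,
    delta (Nop k (bw k w)) = LinearMap.lTensor (FN k X) (Nop k) (delta (bw k w))
  delta_split : ∀ (w : NW X) (a : Lt X) (rest : List (Lt X))
      (ha : GoodW [a]) (hrest : GoodW rest), w.1 = a :: rest → rest ≠ [] →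
      delta (bw k w) =
        mul2 k toDiamondSpec (delta (bw k ⟨[a], ha⟩)) (delta (bw k ⟨rest, hrest⟩))

/-- The product `w₁ ⋄ w₂ ⋄ ⋯ ⋄ w_m ∈ FN(X)` of a sequence of letters from `X ⊔ ⌊𝔛_∞⌋`
(the empty product being `1`). -/
def prodOf (d : DiamondSpec k X) : (l : List (Lt X)) → (∀ a ∈ l, GoodL a) → FN k X
  | [], _ => bw k one
  | a :: rest, h =>
      d.mul (bw k (letterW a (h a (List.mem_cons_self (a := a) (l := rest)))))
        (prodOf d rest (fun b hb => h b (List.mem_cons_of_mem a hb)))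

mutual
  /-- The degree of a letter: `deg(x) = 1` for `x ∈ X`, `deg(⌊u⌋) = 1 + deg(u)`. -/
  def degL : Lt X → ℕ
    | Lt.var _ => 1
    | Lt.brk u => 1 + degList u
  /-- The degree of a bracketed word: the total number of occurrences of elements of `X`
  and of brackets `⌊·⌋` in it. -/
  def degList : List (Lt X) → ℕ
    | [] => 0
    | a :: rest => degL a + degList rest
end

/-- The homogeneous component `FN^(n)`: the `k`-span of the basis words of degree `n`. -/
def FNdeg (n : ℕ) : Submodule k (FN k X) :=
  Submodule.span k {f | ∃ w : NW X, degList w.1 = n ∧ f = bw k w}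

/-- The image `A ⊗ B` of the tensor product of two submodules inside `M ⊗ M`. -/
def tsub {M : Type w} [AddCommGroup M] [Module k M] (A B : Submodule k M) :
    Submodule k (M ⊗[k] M) :=
  Submodule.span k {x | ∃ a ∈ A, ∃ b ∈ B, x = a ⊗ₜ[k] b}

/- The counit is the coefficient of the empty word, and this coefficient is multiplicative on
`k𝔐(X)` because the empty word has no nontrivial factorisation. Hence `ε(u ⋄ v) = ε(u)ε(v)`
whenever `u ⋄ v` is the concatenation `uv`. Otherwise `u = u₀⌊a⌋` and `v = ⌊b⌋v₀` are nonempty,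
so `ε(u)ε(v) = 0`, and `u ⋄ v = u₀ (⌊a⌋ ⋄ ⌊b⌋) v₀` with `⌊a⌋ ⋄ ⌊b⌋` in the image of `N_X`,
on which `ε` vanishes. -/

lemma _root_.MonoidAlgebra.mul_coeff_one {R M : Type*} [Semiring R] [LeftCancelMonoid M]
    [Subsingleton Mˣ] (x y : MonoidAlgebra R M) :
    (x * y).coeff 1 = x.coeff 1 * y.coeff 1 := by
  rw [MonoidAlgebra.coeff_mul_antidiag x y 1 {(1, 1)} (by simp [Prod.ext_iff])]
  simp

lemma GoodL.goodW_of_brk {l : List (Lt X)} (h : GoodL (Lt.brk l)) : GoodW l := by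
  cases h with
  | brk _ hletters hchain => exact ⟨hletters, hchain⟩

lemma bw_brk (w : NW X) (h : GoodW [Lt.brk w.1]) : bw k ⟨[Lt.brk w.1], h⟩ = Nop k (bw k w) :=
  (Finsupp.mapDomain_single (f := NopW)).symm

lemma eps_eq_coeff_iota (f : FN k X) : eps k f = (iota k f).coeff 1 :=
  (Finsupp.mapDomain_apply (fun _ _ h => Subtype.ext (FreeMonoid.ofList.injective h)) f one).symm

lemma eps_bw_of_ne_one {w : NW X} (hw : w ≠ one) : eps k (bw k w) = 0 :=
  Finsupp.single_eq_of_ne hw.symm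

lemma eps_Nop (f : FN k X) : eps k (Nop k f) = 0 := by
  refine Finsupp.mapDomain_of_notMem_range f one ?_
  rintro ⟨w, hw⟩
  exact List.cons_ne_nil _ _ (congrArg Subtype.val hw)

variable {k}

lemma eps_mul_Nop_Nop (d : DiamondSpec k X) (u v : NW X) :
    eps k (d.mul (Nop k (bw k u)) (Nop k (bw k v))) = 0 := by
  simp only [d.brkbrk, map_sub, map_add, eps_Nop, add_zero, sub_zero]

lemma eps_mul_bw_of_concat (d : DiamondSpec k X) (u v : NW X)
    (hcat : iota k (d.mul (bw k u) (bw k v)) = iota k (bw k u) * iota k (bw k v)) :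
    eps k (d.mul (bw k u) (bw k v)) = eps k (bw k u) * eps k (bw k v) := by
  simp only [eps_eq_coeff_iota, hcat, MonoidAlgebra.mul_coeff_one]

lemma eps_mul_bw_of_brk_brk (d : DiamondSpec k X) (u v : NW X) {u₀ v₀ a b : List (Lt X)}
    (hu : u.1 = u₀ ++ [Lt.brk a]) (hv : v.1 = Lt.brk b :: v₀) :
    eps k (d.mul (bw k u) (bw k v)) = 0 := by
  have ha : GoodL (Lt.brk a) := u.2.1 _ (by simp [hu])
  have hb : GoodL (Lt.brk b) := v.2.1 _ (by simp [hv])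
  have hsplit := d.split u v u₀ v₀ _ _ (goodW_singleton ha) (goodW_singleton hb) hu hv
  have hmid : eps k (d.mul (bw k ⟨[Lt.brk a], goodW_singleton ha⟩)
      (bw k ⟨[Lt.brk b], goodW_singleton hb⟩)) = 0 := by
    rw [bw_brk k ⟨a, ha.goodW_of_brk⟩, bw_brk k ⟨b, hb.goodW_of_brk⟩]
    exact eps_mul_Nop_Nop d _ _
  rw [eps_eq_coeff_iota, hsplit, MonoidAlgebra.mul_coeff_one, MonoidAlgebra.mul_coeff_one,
    ← eps_eq_coeff_iota, hmid, mul_zero, zero_mul]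

lemma eps_mul_bw (d : DiamondSpec k X) (u v : NW X) :
    eps k (d.mul (bw k u) (bw k v)) = eps k (bw k u) * eps k (bw k v) := by
  by_cases hbrk : ∃ a b, u.1.getLast? = some (Lt.brk a) ∧ v.1.head? = some (Lt.brk b)
  · obtain ⟨a, b, hlast, hhead⟩ := hbrk
    obtain ⟨u₀, hu⟩ := List.getLast?_eq_some_iff.1 hlast
    obtain ⟨v₀, hv⟩ := List.head?_eq_some_iff.1 hhead
    have hu_ne : u ≠ one := fun h => by simp [h, one] at hu
    rw [eps_mul_bw_of_brk_brk d u v hu hv, eps_bw_of_ne_one k hu_ne, zero_mul]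
  · exact eps_mul_bw_of_concat d u v (d.concat u v hbrk)

/-- for all `u, v ∈ FN(X)`, `ε(u ⋄ v) = ε(u)ε(v)`; together with
`ε(1) = 1`, `ε` is a `k`-algebra homomorphism from `(FN(X), ⋄)` to `k`. -/
theorem stmt8_eps_mult (k : Type v) [CommRing k] {X : Type u}
    (d : DiamondSpec k X) :
    (∀ u v : FN k X, eps k (d.mul u v) = eps k u * eps k v) ∧
    eps k (bw k (one (X := X))) = 1 := by
  have hbil : d.mul.compr₂ (eps k) = (LinearMap.mul k k).compl₁₂ (eps k) (eps k) :=
    Finsupp.lhom_ext' fun u => LinearMap.ext_ring <| Finsupp.lhom_ext' fun v =>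
      LinearMap.ext_ring (eps_mul_bw d u v)
  exact ⟨fun u v => LinearMap.congr_fun₂ hbil u v, Finsupp.single_eq_same⟩

end

end Nij
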